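/- Let X be a Polish space and let R ⊆ R' ⊆ C_b(X) be two subrings that approximate open sets. Let V be a normed R'-module (hence, by restriction of the action, also a normed R-module) and let N be a σ-additive map from the Borel σ-algebra of X to the continuous dual V'. Then N is weakly local with respect to R (i.e. N(A)(v) = 0 for every open A and v with ‖v‖_{|A,R} = 0) if and only if N is weakly local with respect to R' (i.e. N(A)(v) = 0 for every open A and v with ‖v‖_{|A,R'} = 0), where ‖v‖_{|A,S} := sup{‖f v‖ : f ∈ S, supp f ⊆ A, ‖f‖_∞ ≤ 1} for a subring S. -/

import Mathlib

/-!
If `R ⊆ R'` and the actions agree, then `‖v‖_{|A,R} ≤ ‖v‖_{|A,R'}`, so weak locality for `R`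
gives weak locality for `R'`. Conversely, suppose `‖v‖_{|A,R} = 0`. The functions `g_k ∈ R`
increasing to `χ_A` exhaust `A` by the open sets `B_k = {g_k > 3/4}`, and clamping `4 g_k - 2`
to `[0, 1]` yields a cutoff `h_k ∈ R` supported in `A` and equal to `1` on `B_k`. Then
`h_k v = 0`, so every `f ∈ R'` supported in `B_k` satisfies `f v = f h_k v = 0`, i.e.
`‖v‖_{|B_k,R'} = 0` and `N(B_k) v = 0`; σ-additivity gives `N(A) v = lim N(B_k) v = 0`.
-/

open BoundedContinuousFunction Filter Topology Set MeasureTheory ENNReal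

noncomputable section

/-- A subring `R ⊆ C_b(X)` approximates open sets. -/
structure ApproximatesOpenSets {X : Type*} [TopologicalSpace X] (R : Subring (X →ᵇ ℝ)) : Prop where
  const_mem : ∀ c : ℝ, const X c ∈ R
  sup_mem : ∀ f g : X →ᵇ ℝ, f ∈ R → g ∈ R → ∃ h ∈ R, ∀ x, h x = max (f x) (g x)
  inf_mem : ∀ f g : X →ᵇ ℝ, f ∈ R → g ∈ R → ∃ h ∈ R, ∀ x, h x = min (f x) (g x)
  const_mul_mem : ∀ (c : ℝ) (f : X →ᵇ ℝ), f ∈ R → const X c * f ∈ R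
  approx : ∀ A : Set X, IsOpen A →
    ∃ f : ℕ → X →ᵇ ℝ, (∀ k, f k ∈ R) ∧ (∀ x, Monotone fun k => f k x) ∧
      ∀ x, Tendsto (fun k => f k x) atTop (𝓝 (A.indicator (fun _ => (1:ℝ)) x))

/-- The action of constant functions in `R` agrees with the real scalar multiplication. -/
def ConstSMulCompat {X : Type*} [TopologicalSpace X] (R : Subring (X →ᵇ ℝ)) (V : Type*)
    [NormedAddCommGroup V] [NormedSpace ℝ V] [Module R V] : Prop :=
  ∀ (c : ℝ) (hc : const X c ∈ R) (v : V), (⟨const X c, hc⟩ : ↥R) • v = c • v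

/-- The compatibility inequality defining a normed `R`-module. -/
def NormSMulCompat {X : Type*} [TopologicalSpace X] (R : Subring (X →ᵇ ℝ)) (V : Type*)
    [NormedAddCommGroup V] [Module R V] : Prop :=
  ∀ (s : Finset ℕ) (f : ℕ → ↥R) (v : ℕ → V) (M K : ℝ), 0 ≤ M → 0 ≤ K →
    ((s : Set ℕ).Pairwise fun i j =>
      Disjoint (tsupport ⇑((f i : X →ᵇ ℝ))) (tsupport ⇑((f j : X →ᵇ ℝ)))) →
    (∀ i ∈ s, ‖(f i : X →ᵇ ℝ)‖ ≤ M) → (∀ i ∈ s, ‖v i‖ ≤ K) →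
    ‖∑ i ∈ s, f i • v i‖ ≤ M * K

/-- The local seminorm `‖v‖_{|A}`. -/
def locNorm {X : Type*} [TopologicalSpace X] (R : Subring (X →ᵇ ℝ)) {V : Type*}
    [NormedAddCommGroup V] [Module R V] (A : Set X) (v : V) : ℝ :=
  sSup {r : ℝ | ∃ f : ↥R, tsupport ⇑((f : X →ᵇ ℝ)) ⊆ A ∧ ‖(f : X →ᵇ ℝ)‖ ≤ 1 ∧ r = ‖f • v‖}

/-- The germ seminorm `|v|_g(x)`. -/
def germNorm {X : Type*} [TopologicalSpace X] (R : Subring (X →ᵇ ℝ)) {V : Type*}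
    [NormedAddCommGroup V] [Module R V] (v : V) (x : X) : ℝ :=
  sInf {r : ℝ | ∃ A : Set X, IsOpen A ∧ x ∈ A ∧ r = locNorm R A v}

/-- `supp v ⊆ B`: there is a closed set `C ⊆ B` with `‖v‖_{|X∖C} = 0`. -/
def suppIn {X : Type*} [TopologicalSpace X] (R : Subring (X →ᵇ ℝ)) {V : Type*}
    [NormedAddCommGroup V] [Module R V] (v : V) (B : Set X) : Prop :=
  ∃ C : Set X, IsClosed C ∧ C ⊆ B ∧ locNorm R Cᶜ v = 0

/-- σ-additivity, with convergence of the partial sums in norm. -/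
def SigmaAdditive {X : Type*} [MeasurableSpace X] {E : Type*} [NormedAddCommGroup E]
    (N : Set X → E) : Prop :=
  ∀ A : ℕ → Set X, (∀ n, MeasurableSet (A n)) → Pairwise (Function.onFun Disjoint A) →
    Tendsto (fun n => ∑ k ∈ Finset.range n, N (A k)) atTop (𝓝 (N (⋃ k, A k)))

/-- A local vector measure on the normed `R`-module `V`. -/
structure IsLocalVectorMeasure {X : Type*} [TopologicalSpace X] [MeasurableSpace X]
    (R : Subring (X →ᵇ ℝ)) {V : Type*} [NormedAddCommGroup V] [NormedSpace ℝ V] [Module R V]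
    (N : Set X → V →L[ℝ] ℝ) : Prop where
  sigma_additive : SigmaAdditive N
  weakly_local : ∀ A : Set X, IsOpen A → ∀ v : V, locNorm R A v = 0 → N A v = 0

/-- The total variation `|N|(B)`, as the supremum of `Σ ‖N(A_i)‖` over finite Borel
partitions of `B`. -/
def totalVar {X : Type*} [MeasurableSpace X] {E : Type*} [NormedAddCommGroup E]
    (N : Set X → E) (B : Set X) : ℝ≥0∞ :=
  ⨆ (n : ℕ) (A : Fin n → Set X)
    (_ : (∀ i, MeasurableSet (A i)) ∧ Pairwise (Function.onFun Disjoint A) ∧ (⋃ i, A i) = B),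
      ∑ i, (‖N (A i)‖₊ : ℝ≥0∞)

/-- Tightness of a functional `F ∈ V'` with respect to `R`. -/
def IsTight {X : Type*} [TopologicalSpace X] (R : Subring (X →ᵇ ℝ)) {V : Type*}
    [NormedAddCommGroup V] [NormedSpace ℝ V] [Module R V] (F : V →L[ℝ] ℝ) : Prop :=
  ∀ (v : V) (f : ℕ → ↥R),
    (∀ x, Antitone fun n => ((f n : X →ᵇ ℝ)) x) →
    (∀ x, Tendsto (fun n => ((f n : X →ᵇ ℝ)) x) atTop (𝓝 (0:ℝ))) →
    Tendsto (fun n => F ((f n) • v)) atTop (𝓝 (0:ℝ))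


namespace SigmaAdditive

variable {X : Type*} [MeasurableSpace X] {E : Type*} [NormedAddCommGroup E] {N : Set X → E}

theorem empty (hN : SigmaAdditive N) : N ∅ = 0 := by
  have h := hN (fun _ => ∅) (fun _ => .empty) (fun _ _ _ => disjoint_bot_left)
  simp only [iUnion_empty, Finset.sum_const, Finset.card_range] at h
  have h' := (h.comp (tendsto_add_atTop_nat 1)).sub h
  simp only [Function.comp_def, succ_nsmul, add_sub_cancel_left, sub_self] at h'
  exact tendsto_nhds_unique tendsto_const_nhds h'

theorem sum_range (hN : SigmaAdditive N) {D : ℕ → Set X} (hD : ∀ k, MeasurableSet (D k))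
    (hdisj : Pairwise (Function.onFun Disjoint D)) (n : ℕ) :
    ∑ k ∈ Finset.range n, N (D k) = N (⋃ k ∈ Finset.range n, D k) := by
  classical
  set D' : ℕ → Set X := fun k => if k < n then D k else ∅
  have hD' : ∀ k, MeasurableSet (D' k) := fun k => by
    by_cases hk : k < n <;> simp [D', hk, hD k]
  have hdisj' : Pairwise (Function.onFun Disjoint D') := fun i j hij => by
    by_cases hi : i < n <;> by_cases hj : j < n <;> simp [D', Function.onFun, hi, hj, hdisj hij]
  have hunion : (⋃ k, D' k) = ⋃ k ∈ Finset.range n, D k := by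
    ext x; simp [D']
  have hsum : ∀ m ≥ n, ∑ k ∈ Finset.range m, N (D' k) = ∑ k ∈ Finset.range n, N (D k) := by
    intro m hm
    rw [← Finset.sum_range_add_sum_Ico _ hm,
      Finset.sum_eq_zero (s := Finset.Ico n m) fun k hk => ?_, add_zero]
    · exact Finset.sum_congr rfl fun k hk => by simp [D', Finset.mem_range.1 hk]
    · simp [D', not_lt.2 (Finset.mem_Ico.1 hk).1, empty hN]
  refine tendsto_nhds_unique_of_eventuallyEq tendsto_const_nhds (hunion ▸ hN D' hD' hdisj') ?_
  exact (eventually_ge_atTop n).mono fun m hm => (hsum m hm).symm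

theorem tendsto_iUnion (hN : SigmaAdditive N) {B : ℕ → Set X}
    (hB : ∀ n, MeasurableSet (B n)) (hmono : Monotone B) :
    Tendsto (fun n => N (B n)) atTop (𝓝 (N (⋃ n, B n))) := by
  have hD := MeasurableSet.disjointed hB
  have h := (hN _ hD (disjoint_disjointed B)).comp (tendsto_add_atTop_nat 1)
  rw [iUnion_disjointed] at h
  refine h.congr fun n => ?_
  rw [Function.comp_apply, sum_range hN hD (disjoint_disjointed B),
    biUnion_range_succ_disjointed, hmono.partialSups_eq]

end SigmaAdditive

def IsSMulRestriction {X : Type*} [TopologicalSpace X] (R R' : Subring (X →ᵇ ℝ)) (V : Type*)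
    [AddCommGroup V] [Module R V] [Module R' V] : Prop :=
  ∀ (f : X →ᵇ ℝ) (hf : f ∈ R) (hf' : f ∈ R') (v : V), (⟨f, hf⟩ : ↥R) • v = (⟨f, hf'⟩ : ↥R') • v

theorem smul_eq_zero_of_eqOn_one {X : Type*} [TopologicalSpace X] {R : Subring (X →ᵇ ℝ)}
    {V : Type*} [AddCommGroup V] [Module R V] {f h : R} {v : V}
    (hfh : EqOn (h : X →ᵇ ℝ) 1 (tsupport (f : X →ᵇ ℝ))) (hv : h • v = 0) : f • v = 0 := by
  have hf : f = f * h := Subtype.ext <| BoundedContinuousFunction.ext fun x => by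
    by_cases hx : x ∈ tsupport (f : X →ᵇ ℝ)
    · simp [hfh hx]
    · simp [image_eq_zero_of_notMem_tsupport hx]
  rw [hf, mul_smul, hv, smul_zero]

section LocNorm

variable {X : Type*} [TopologicalSpace X] {V : Type*} [NormedAddCommGroup V]
  {R : Subring (X →ᵇ ℝ)} [Module R V]

theorem NormSMulCompat.norm_smul_le (hR : NormSMulCompat R V) (f : R) (v : V)
    (hf : ‖(f : X →ᵇ ℝ)‖ ≤ 1) : ‖f • v‖ ≤ ‖v‖ := by
  simpa using hR {0} (fun _ => f) (fun _ => v) 1 ‖v‖ zero_le_one (norm_nonneg v)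
    (by simp) (by simpa using hf) (by simp)

theorem NormSMulCompat.of_le {R' : Subring (X →ᵇ ℝ)} [Module R' V] (hRR' : R ≤ R')
    (hrestrict : IsSMulRestriction R R' V) (hR' : NormSMulCompat R' V) : NormSMulCompat R V := by
  intro s f v M K hM hK hdisj hf hv
  have := hR' s (fun i => ⟨f i, hRR' (f i).2⟩) v M K hM hK hdisj hf hv
  rwa [Finset.sum_congr rfl fun i _ => (hrestrict _ (f i).2 _ (v i)).symm] at this

theorem locNorm_eq_zero_of_forall {A : Set X} {v : V}
    (h : ∀ f : R, tsupport (f : X →ᵇ ℝ) ⊆ A → ‖(f : X →ᵇ ℝ)‖ ≤ 1 → f • v = 0) :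
    locNorm R A v = 0 := by
  refine le_antisymm (Real.sSup_nonpos ?_) (Real.sSup_nonneg ?_)
  · rintro _ ⟨f, hfA, hf, rfl⟩
    rw [h f hfA hf, norm_zero]
  · rintro _ ⟨f, -, -, rfl⟩
    exact norm_nonneg _

theorem locNorm_eq_zero_iff (hR : NormSMulCompat R V) {A : Set X} {v : V} :
    locNorm R A v = 0 ↔
      ∀ f : R, tsupport (f : X →ᵇ ℝ) ⊆ A → ‖(f : X →ᵇ ℝ)‖ ≤ 1 → f • v = 0 := by
  refine ⟨fun h f hfA hf => norm_le_zero_iff.1 (h ▸ ?_), locNorm_eq_zero_of_forall⟩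
  exact le_csSup ⟨‖v‖, by rintro _ ⟨g, -, hg, rfl⟩; exact hR.norm_smul_le g v hg⟩ ⟨f, hfA, hf, rfl⟩

theorem locNorm_eq_zero_of_eqOn_one {B : Set X} {h : R} {v : V} (hh : EqOn (h : X →ᵇ ℝ) 1 B)
    (hv : h • v = 0) : locNorm R B v = 0 :=
  locNorm_eq_zero_of_forall fun _ hfB _ => smul_eq_zero_of_eqOn_one (hh.mono hfB) hv

end LocNorm

namespace ApproximatesOpenSets

variable {X : Type*} [TopologicalSpace X] {R : Subring (X →ᵇ ℝ)}

theorem exists_clamp_mem (hR : ApproximatesOpenSets R) {g : X →ᵇ ℝ} (hg : g ∈ R) (a b : ℝ) :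
    ∃ h ∈ R, ∀ x, h x = min (max (a * g x + b) 0) 1 := by
  have hlin : const X a * g + const X b ∈ R :=
    R.add_mem (hR.const_mul_mem a g hg) (hR.const_mem b)
  obtain ⟨q, hqR, hq⟩ := hR.sup_mem _ _ hlin (hR.const_mem 0)
  obtain ⟨h, hhR, hh⟩ := hR.inf_mem _ _ hqR (hR.const_mem 1)
  exact ⟨h, hhR, fun x => by simp [hh, hq]⟩

theorem exists_cutoff (hR : ApproximatesOpenSets R) {A : Set X} {g : X →ᵇ ℝ} (hg : g ∈ R)
    (hgA : ∀ x ∉ A, g x ≤ 0) :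
    ∃ h ∈ R, ‖h‖ ≤ 1 ∧ tsupport h ⊆ A ∧ EqOn h 1 {x | 3 / 4 < g x} := by
  obtain ⟨h, hhR, hh⟩ := hR.exists_clamp_mem hg 4 (-2)
  refine ⟨h, hhR, ?_, ?_, fun x (hx : 3 / 4 < g x) => ?_⟩
  · refine (BoundedContinuousFunction.norm_le zero_le_one).2 fun x => ?_
    rw [Real.norm_eq_abs, abs_le, hh]
    exact ⟨by linarith [le_min (le_max_right (4 * g x + -2) 0) zero_le_one], min_le_right _ _⟩
  · have hsupp : Function.support h ⊆ {x | 1 / 2 ≤ g x} := fun x hx => by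
      refine by_contra fun hgx : ¬1 / 2 ≤ g x => hx ?_
      rw [hh, max_eq_right (by linarith [not_le.1 hgx]), min_eq_left zero_le_one]
    refine (closure_minimal hsupp (isClosed_le continuous_const g.continuous)).trans ?_
    intro x (hx : 1 / 2 ≤ g x)
    by_contra hxA
    linarith [hgA x hxA]
  · rw [hh, max_eq_left (by linarith), min_eq_right (by linarith), Pi.one_apply]

theorem exists_exhaustion (hR : ApproximatesOpenSets R) {A : Set X} (hA : IsOpen A) :
    ∃ B : ℕ → Set X, (∀ k, IsOpen (B k)) ∧ Monotone B ∧ ⋃ k, B k = A ∧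
      ∀ k, ∃ h ∈ R, ‖h‖ ≤ 1 ∧ tsupport h ⊆ A ∧ EqOn h 1 (B k) := by
  obtain ⟨g, hgR, hgmono, hglim⟩ := hR.approx A hA
  have hgle : ∀ k x, g k x ≤ A.indicator 1 x := fun k x => (hgmono x).ge_of_tendsto (hglim x) k
  refine ⟨fun k => {x | 3 / 4 < g k x}, fun k => isOpen_lt continuous_const (g k).continuous,
    fun k l hkl x (hx : 3 / 4 < g k x) => hx.trans_le (hgmono x hkl), ?_,
    fun k => hR.exists_cutoff (hgR k) fun x hx => by simpa [hx] using hgle k x⟩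
  ext x
  simp only [mem_iUnion]
  constructor
  · rintro ⟨k, hk : 3 / 4 < g k x⟩
    by_contra hxA
    linarith [hgle k x, indicator_of_notMem hxA (1 : X → ℝ)]
  · intro hx
    have hlim := hglim x
    rw [indicator_of_mem hx] at hlim
    exact (hlim.eventually (eventually_gt_nhds (by norm_num : (3 : ℝ) / 4 < 1))).exists

end ApproximatesOpenSets

def IsWeaklyLocal {X : Type*} [TopologicalSpace X] (R : Subring (X →ᵇ ℝ)) {V : Type*}
    [NormedAddCommGroup V] [NormedSpace ℝ V] [Module R V] (N : Set X → V →L[ℝ] ℝ) : Prop :=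
  ∀ A : Set X, IsOpen A → ∀ v : V, locNorm R A v = 0 → N A v = 0

namespace IsWeaklyLocal

variable {X : Type*} [TopologicalSpace X] {V : Type*} [NormedAddCommGroup V] [NormedSpace ℝ V]
  {R R' : Subring (X →ᵇ ℝ)} [Module R V] [Module R' V] {N : Set X → V →L[ℝ] ℝ}

theorem mono (hRR' : R ≤ R') (hrestrict : IsSMulRestriction R R' V)
    (hnorm' : NormSMulCompat R' V) (hN : IsWeaklyLocal R N) : IsWeaklyLocal R' N := by
  intro A hA v hv
  refine hN A hA v ((locNorm_eq_zero_iff (hnorm'.of_le hRR' hrestrict)).2 fun f hfA hf => ?_)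
  exact (hrestrict _ f.2 (hRR' f.2) v).trans
    ((locNorm_eq_zero_iff hnorm').1 hv ⟨f, hRR' f.2⟩ hfA hf)

theorem of_approximatesOpenSets [MeasurableSpace X] [OpensMeasurableSpace X] (hRR' : R ≤ R')
    (hrestrict : IsSMulRestriction R R' V) (hnorm' : NormSMulCompat R' V)
    (hR : ApproximatesOpenSets R) (hadd : SigmaAdditive N) (hN : IsWeaklyLocal R' N) :
    IsWeaklyLocal R N := by
  intro A hA v hv
  obtain ⟨B, hBopen, hBmono, hBA, hcutoff⟩ := hR.exists_exhaustion hA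
  have hNB : ∀ k, N (B k) v = 0 := fun k => by
    obtain ⟨h, hhR, hh1, hhA, hhB⟩ := hcutoff k
    have hhv : (⟨h, hhR⟩ : R) • v = 0 :=
      (locNorm_eq_zero_iff (hnorm'.of_le hRR' hrestrict)).1 hv _ hhA hh1
    rw [hrestrict h hhR (hRR' hhR)] at hhv
    exact hN _ (hBopen k) v (locNorm_eq_zero_of_eqOn_one hhB hhv)
  have hlim := SigmaAdditive.tendsto_iUnion hadd (fun k => (hBopen k).measurableSet) hBmono
  rw [hBA] at hlim
  exact tendsto_nhds_unique (((ContinuousLinearMap.apply ℝ ℝ v).continuous.tendsto _).comp hlim)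
    (tendsto_const_nhds.congr fun k => (hNB k).symm)

end IsWeaklyLocal

theorem statement10_general {X : Type*} [MetricSpace X] [MeasurableSpace X] [BorelSpace X]
    {V : Type*} [NormedAddCommGroup V] [NormedSpace ℝ V]
    (R R' : Subring (X →ᵇ ℝ)) (hRR' : R ≤ R')
    [Module R V] [Module R' V]
    (hrestrict : ∀ (f : X →ᵇ ℝ) (hf : f ∈ R) (hf' : f ∈ R') (v : V),
      (⟨f, hf⟩ : ↥R) • v = (⟨f, hf'⟩ : ↥R') • v)
    (hR : ApproximatesOpenSets R) (hnorm' : NormSMulCompat R' V)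
    (N : Set X → V →L[ℝ] ℝ) (hadd : SigmaAdditive N) :
    (∀ A : Set X, IsOpen A → ∀ v : V, locNorm R A v = 0 → N A v = 0) ↔
      (∀ A : Set X, IsOpen A → ∀ v : V, locNorm R' A v = 0 → N A v = 0) :=
  ⟨IsWeaklyLocal.mono hRR' hrestrict hnorm',
    IsWeaklyLocal.of_approximatesOpenSets hRR' hrestrict hnorm' hR hadd⟩

/-- for subrings `R ⊆ R'` both approximating open sets and `V` a normed
`R'`-module (hence a normed `R`-module by restricting the action), a σ-additive
`N : Borel → V'` is weakly local w.r.t. `R` iff it is weakly local w.r.t. `R'`. -/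
theorem statement10 {X : Type*} [MetricSpace X] [CompleteSpace X]
    [TopologicalSpace.SeparableSpace X] [MeasurableSpace X] [BorelSpace X]
    {V : Type*} [NormedAddCommGroup V] [NormedSpace ℝ V]
    (R R' : Subring (X →ᵇ ℝ)) (hRR' : R ≤ R')
    [Module R V] [Module R' V]
    (hrestrict : ∀ (f : X →ᵇ ℝ) (hf : f ∈ R) (hf' : f ∈ R') (v : V),
      (⟨f, hf⟩ : ↥R) • v = (⟨f, hf'⟩ : ↥R') • v)
    (hR : ApproximatesOpenSets R) (hR' : ApproximatesOpenSets R')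
    (hconst' : ConstSMulCompat R' V) (hnorm' : NormSMulCompat R' V)
    (N : Set X → V →L[ℝ] ℝ) (hadd : SigmaAdditive N) :
    (∀ A : Set X, IsOpen A → ∀ v : V, locNorm R A v = 0 → N A v = 0) ↔
      (∀ A : Set X, IsOpen A → ∀ v : V, locNorm R' A v = 0 → N A v = 0) :=
  statement10_general R R' hRR' hrestrict hR hnorm' N hadd
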